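/- arXiv:2306.16889 — 2 statements merged into one kernel-verified Lean document; each statement's English description precedes it below -/
import Mathlib

section
/- ∑_{k=1}^∞ (−1)^k (216/49)^k / (k · C(3k,k)) = (4√3/9)·arctan(√3/5) − (2/3)·log 7. -/
/-!
By the Beta integral, `1 / ((k+1) C(3k+3, k+1)) = ∫₀¹ t^k (1-t)^(2k+2) dt`. Since
`0 ≤ t (1-t)² ≤ 4/27` on `[0,1]`, for `|c| < 27/4` the series `∑ c^(k+1) / ((k+1) C(3k+3, k+1))`
is therefore the integral of a dominated geometric series, `∫₀¹ c (1-t)² / (1 - c t (1-t)²) dt`.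
For `c = -216/49` the denominator factors as `(6t+1)(36t² - 78t + 49) / 49`, and partial fractions
give an elementary primitive; the arctangent values at the endpoints combine to `3 arctan (√3/5)`.
-/

open Real Set MeasureTheory
open scoped Nat

theorem integral_pow_mul_one_sub_pow (a b : ℕ) :
    ∫ t in (0:ℝ)..1, t ^ a * (1 - t) ^ b = (a ! * b ! / (a + b + 1)! : ℝ) := by
  have hbeta : Complex.betaIntegral (a + 1) (b + 1) = ↑(∫ t in (0:ℝ)..1, t ^ a * (1 - t) ^ b) := by
    rw [Complex.betaIntegral, ← intervalIntegral.integral_ofReal]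
    refine intervalIntegral.integral_congr fun t _ => ?_
    push_cast
    simp only [add_sub_cancel_right, Complex.cpow_natCast]
  have hGamma := Complex.Gamma_mul_Gamma_eq_betaIntegral (s := a + 1) (t := b + 1)
    (by simp; positivity) (by simp; positivity)
  rw [show (a + 1 : ℂ) + (b + 1) = ((a + b + 1 : ℕ) : ℂ) + 1 by push_cast; ring,
    Complex.Gamma_nat_eq_factorial, Complex.Gamma_nat_eq_factorial,
    Complex.Gamma_nat_eq_factorial, hbeta] at hGamma
  have hfac : ((a + b + 1)! : ℂ) ≠ 0 := by exact_mod_cast (a + b + 1).factorial_ne_zero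
  apply Complex.ofReal_injective
  push_cast
  rw [eq_div_iff hfac]
  linear_combination -hGamma

theorem integral_pow_mul_one_sub_pow_eq_inv_mul_choose (a b : ℕ) :
    ∫ t in (0:ℝ)..1, t ^ a * (1 - t) ^ b = (((a:ℝ) + 1) * ((a + b + 1).choose (a + 1) : ℝ))⁻¹ := by
  have h := Nat.add_choose_mul_factorial_mul_factorial b (a + 1)
  rw [show b + (a + 1) = a + b + 1 by ring, Nat.factorial_succ] at h
  rw [integral_pow_mul_one_sub_pow, ← h]
  push_cast
  have : (a ! : ℝ) ≠ 0 := by positivity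
  have : (b ! : ℝ) ≠ 0 := by positivity
  field_simp

theorem hasSum_pow_succ_mul_pow_mul {c x : ℝ} (h : |c * x| < 1) (y : ℝ) :
    HasSum (fun k : ℕ => c ^ (k + 1) * x ^ k * y) (c * y / (1 - c * x)) := by
  have hsum := (hasSum_geometric_of_abs_lt_one h).mul_left (c * y)
  rw [← div_eq_mul_inv] at hsum
  refine hsum.congr_fun fun k => ?_
  rw [mul_pow]
  ring

theorem mul_one_sub_sq_mem_Icc {t : ℝ} (ht : t ∈ Icc (0:ℝ) 1) :
    t * (1 - t) ^ 2 ∈ Icc 0 (4 / 27) :=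
  ⟨by have := ht.1; have := ht.2; positivity, by nlinarith [ht.1, ht.2, sq_nonneg (3 * t - 1)]⟩

theorem div_mul_choose_eq_integral (c : ℝ) (k : ℕ) :
    c ^ (k + 1) / (((k:ℝ) + 1) * ((3 * (k + 1)).choose (k + 1) : ℝ)) =
      ∫ t in (0:ℝ)..1, c ^ (k + 1) * (t * (1 - t) ^ 2) ^ k * (1 - t) ^ 2 := by
  have hpow : ∀ t : ℝ, (t * (1 - t) ^ 2) ^ k * (1 - t) ^ 2 = t ^ k * (1 - t) ^ (2 * k + 2) := by
    intro t; rw [mul_pow, ← pow_mul, pow_add]; ring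
  simp_rw [mul_assoc, hpow, intervalIntegral.integral_const_mul,
    integral_pow_mul_one_sub_pow_eq_inv_mul_choose, show k + (2 * k + 2) + 1 = 3 * (k + 1) by omega,
    div_eq_mul_inv]

theorem hasSum_div_mul_choose {c : ℝ} (hc : |c| < 27 / 4) :
    HasSum (fun k : ℕ => c ^ (k + 1) / (((k:ℝ) + 1) * ((3 * (k + 1)).choose (k + 1) : ℝ)))
      (∫ t in (0:ℝ)..1, c * (1 - t) ^ 2 / (1 - c * (t * (1 - t) ^ 2))) := by
  have hratio : |c| * (4 / 27) < 1 := by linarith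
  simp_rw [div_mul_choose_eq_integral]
  refine intervalIntegral.hasSum_integral_of_dominated_convergence
    (fun k _ => |c| * (|c| * (4 / 27)) ^ k) (fun k => by fun_prop) (fun k => ?_)
    (ae_of_all _ fun _ _ => (summable_geometric_of_lt_one (by positivity) hratio).mul_left _)
    intervalIntegrable_const (ae_of_all _ fun t ht => ?_)
  · filter_upwards with t ht
    rw [uIoc_of_le zero_le_one] at ht
    obtain ⟨hx0, hx1⟩ := mul_one_sub_sq_mem_Icc (Ioc_subset_Icc_self ht)
    have hy : (1 - t) ^ 2 ≤ 1 := by nlinarith [ht.1, ht.2]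
    generalize t * (1 - t) ^ 2 = x at hx0 hx1 ⊢
    calc ‖c ^ (k + 1) * x ^ k * (1 - t) ^ 2‖
        = |c| * (|c| * x) ^ k * (1 - t) ^ 2 := by
          rw [Real.norm_eq_abs, abs_mul, abs_mul, abs_pow, abs_pow, abs_of_nonneg hx0,
            abs_of_nonneg (sq_nonneg (1 - t))]
          ring
      _ ≤ |c| * (|c| * (4 / 27)) ^ k * 1 := by gcongr
      _ = |c| * (|c| * (4 / 27)) ^ k := mul_one _
  · rw [uIoc_of_le zero_le_one] at ht
    obtain ⟨hx0, hx1⟩ := mul_one_sub_sq_mem_Icc (Ioc_subset_Icc_self ht)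
    have hx : |c * (t * (1 - t) ^ 2)| < 1 := by
      rw [abs_mul, abs_of_nonneg hx0]; nlinarith [abs_nonneg c]
    simpa [mul_assoc] using hasSum_pow_succ_mul_pow_mul hx ((1 - t) ^ 2)

noncomputable def arctanLogPrimitive (t : ℝ) : ℝ :=
  -(7 / 9) * log (6 * t + 1) - (1 / 9) * log (36 * t ^ 2 - 78 * t + 49)
    + (4 * √3 / 27) * arctan ((12 * t - 13) * √3 / 9)

theorem hasDerivAt_arctanLogPrimitive {t : ℝ} (ht : -(1 / 6) < t) :
    HasDerivAt arctanLogPrimitive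
      (-(216 / 49) * (1 - t) ^ 2 / (1 - -(216 / 49) * (t * (1 - t) ^ 2))) t := by
  have hlin : 0 < 6 * t + 1 := by linarith
  have hquad : 0 < 36 * t ^ 2 - 78 * t + 49 := by nlinarith [sq_nonneg (12 * t - 13)]
  have h3 : √3 ^ 2 = 3 := sq_sqrt (by norm_num)
  have hlog_lin : HasDerivAt (fun t => log (6 * t + 1)) (6 / (6 * t + 1)) t := by
    simpa using (((hasDerivAt_id t).const_mul 6).add_const 1).log hlin.ne'
  have hlog_quad : HasDerivAt (fun t => log (36 * t ^ 2 - 78 * t + 49))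
      ((36 * (2 * t) - 78) / (36 * t ^ 2 - 78 * t + 49)) t := by
    simpa using ((((hasDerivAt_pow 2 t).const_mul 36).sub
      ((hasDerivAt_id t).const_mul 78)).add_const 49).log hquad.ne'
  have harctan : HasDerivAt (fun t => arctan ((12 * t - 13) * √3 / 9))
      (1 / (1 + ((12 * t - 13) * √3 / 9) ^ 2) * (12 * √3 / 9)) t := by
    have := ((((hasDerivAt_id t).const_mul 12).sub_const 13).mul_const √3).div_const 9
    simpa using this.arctan
  refine (((hlog_lin.const_mul _).sub (hlog_quad.const_mul _)).add
    (harctan.const_mul _)).congr_deriv ?_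
  have hden : 1 + ((12 * t - 13) * √3 / 9) ^ 2 = 4 * (36 * t ^ 2 - 78 * t + 49) / 27 := by
    rw [div_pow, mul_pow, h3]; ring
  have hfactor : 1 - -(216 / 49) * (t * (1 - t) ^ 2)
      = (6 * t + 1) * (36 * t ^ 2 - 78 * t + 49) / 49 := by ring
  rw [hden, hfactor]
  generalize hQ : 36 * t ^ 2 - 78 * t + 49 = Q at hquad ⊢
  field_simp
  rw [h3, ← hQ]
  ring

theorem three_mul_arctan_sqrt_three_div_five :
    3 * arctan (√3 / 5) = arctan (13 * √3 / 9) - arctan (√3 / 9) := by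
  have h3 : √3 ^ 2 = 3 := sq_sqrt (by norm_num)
  have hpos : 0 < √3 := by positivity
  have hlt : √3 < 2 := by nlinarith
  have hadd : ∀ x y z : ℝ, x * y < 1 → x + y = z * (1 - x * y) →
      arctan x + arctan y = arctan z :=
    fun x y z hxy hz => by
      rw [arctan_add hxy, hz, mul_div_cancel_right₀ _ (sub_pos.mpr hxy).ne']
  have htwo := hadd (√3 / 5) (√3 / 5) (5 * √3 / 11) (by nlinarith) (by nlinarith)
  have hthree := hadd (5 * √3 / 11) (√3 / 5) (9 * √3 / 10) (by nlinarith) (by nlinarith)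
  have hlast := hadd (9 * √3 / 10) (√3 / 9) (13 * √3 / 9) (by nlinarith) (by nlinarith)
  linarith

theorem integral_eq_arctan_sub_log :
    ∫ t in (0:ℝ)..1, -(216 / 49) * (1 - t) ^ 2 / (1 - -(216 / 49) * (t * (1 - t) ^ 2)) =
      4 * √3 / 9 * arctan (√3 / 5) - 2 / 3 * log 7 := by
  have hcont : ContinuousOn
      (fun t : ℝ => -(216 / 49) * (1 - t) ^ 2 / (1 - -(216 / 49) * (t * (1 - t) ^ 2)))
      (uIcc 0 1) := by
    refine ContinuousOn.div (by fun_prop) (by fun_prop) fun t ht => ?_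
    rw [uIcc_of_le zero_le_one] at ht
    linarith [(mul_one_sub_sq_mem_Icc ht).1]
  have hderiv : ∀ t ∈ uIcc (0:ℝ) 1, HasDerivAt arctanLogPrimitive
      (-(216 / 49) * (1 - t) ^ 2 / (1 - -(216 / 49) * (t * (1 - t) ^ 2))) t := fun t ht => by
    rw [uIcc_of_le zero_le_one] at ht
    exact hasDerivAt_arctanLogPrimitive (by linarith [ht.1])
  rw [intervalIntegral.integral_eq_sub_of_hasDerivAt hderiv hcont.intervalIntegrable]
  have hlog : log 49 = 2 * log 7 := by
    rw [show (49 : ℝ) = 7 ^ 2 by norm_num, log_pow]; norm_num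
  simp only [arctanLogPrimitive]
  norm_num [hlog]
  rw [neg_div, neg_div, arctan_neg, arctan_neg]
  linear_combination -(4 * √3 / 27) * three_mul_arctan_sqrt_three_div_five

theorem stmt_7 :
    ∑' k : ℕ, (-(216/49) : ℝ)^(k+1) / ((((k:ℝ)+1)) * (((3*(k+1)).choose (k+1) : ℕ) : ℝ)) =
    (4*Real.sqrt 3/9)*Real.arctan (Real.sqrt 3/5) - (2/3)*Real.log 7 := by
  have hc : |(-(216 / 49) : ℝ)| < 27 / 4 := by norm_num [abs_div]
  rw [(hasSum_div_mul_choose hc).tsum_eq, integral_eq_arctan_sub_log]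
end

section
/- ∑_{k=1}^∞ (−27/16)^k / (k · C(3k,k)) = (√15/5)·arctan((4√3 − √15)/11) − log 2. -/
/-!
The Beta integral `∫₀¹ t^k (1-t)^(2k+2) dt = 1/((k+1) C(3k+3,k+1))` turns the series into
`∫₀¹ ∑ x^(k+1) t^k (1-t)^(2k+2) dt = ∫₀¹ x (1-t)² / (1 - x t (1-t)²) dt`, the interchange being
justified for `|x| < 27/4` because `t (1-t)² ≤ 4/27` on `[0, 1]`. At `x = -27/16` the denominator
factors as `(3t+1)(9t²-21t+16)/16`, so the integrand has a primitive made of two logarithms and an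
arctangent; the arctangents at the endpoints combine to `3 arctan((4√3-√15)/11)`.
-/

open Real intervalIntegral

theorem integral_pow_mul_one_sub_pow_succ (m n : ℕ) :
    (m + 1) * ∫ t in (0:ℝ)..1, t ^ m * (1 - t) ^ (n + 1) =
      (n + 1) * ∫ t in (0:ℝ)..1, t ^ (m + 1) * (1 - t) ^ n := by
  have hderiv : ∀ t ∈ Set.uIcc (0:ℝ) 1, HasDerivAt (fun t : ℝ => t ^ (m + 1) * (1 - t) ^ (n + 1))
      ((m + 1) * (t ^ m * (1 - t) ^ (n + 1)) - (n + 1) * (t ^ (m + 1) * (1 - t) ^ n)) t := by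
    intro t _
    refine ((hasDerivAt_pow (m + 1) t).mul
      (((hasDerivAt_id' t).const_sub 1).pow (n + 1))).congr_deriv ?_
    simp only [Nat.cast_add, Nat.cast_one, add_tsub_cancel_right, Pi.pow_apply]
    ring
  have hftc := integral_eq_sub_of_hasDerivAt hderiv (by apply Continuous.intervalIntegrable; fun_prop)
  rw [integral_sub (by apply Continuous.intervalIntegrable; fun_prop)
    (by apply Continuous.intervalIntegrable; fun_prop), integral_const_mul, integral_const_mul] at hftc
  simpa [sub_eq_zero] using hftc

theorem integral_pow_mul_one_sub_pow_s16 (m n : ℕ) :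
    ∫ t in (0:ℝ)..1, t ^ m * (1 - t) ^ n = ((m + 1) * (m + n + 1).choose (m + 1) : ℝ)⁻¹ := by
  induction n generalizing m with
  | zero => simp [integral_pow]
  | succ n ih =>
    have h := integral_pow_mul_one_sub_pow_succ m n
    rw [ih, show m + 1 + n + 1 = m + n + 2 by omega] at h
    have hchoose : ((m + n + 2).choose (m + 2) * (m + 2) : ℝ) =
        (m + n + 2).choose (m + 1) * (n + 1) := by
      exact_mod_cast (Nat.choose_succ_right_eq (m + n + 2) (m + 1)).trans (by congr 1; omega)
    have hC : ((m + n + 2).choose (m + 2) : ℝ) ≠ 0 := by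
      exact_mod_cast (Nat.choose_pos (by omega)).ne'
    rw [show m + (n + 1) + 1 = m + n + 2 by omega]
    refine eq_inv_of_mul_eq_one_left (mul_left_cancel₀ (by positivity : (n + 1 : ℝ) ≠ 0) ?_)
    field_simp at h
    push_cast at h
    linear_combination h - (∫ t in (0:ℝ)..1, t ^ m * (1 - t) ^ (n + 1)) * (m + 1) * hchoose

theorem abs_mul_one_sub_sq_le {t : ℝ} (h0 : 0 ≤ t) (h1 : t ≤ 4 / 3) :
    |t * (1 - t) ^ 2| ≤ 4 / 27 := by
  rw [abs_of_nonneg (by positivity)]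
  nlinarith [mul_nonneg (sq_nonneg (3 * t - 1)) (by linarith : (0:ℝ) ≤ 4 - 3 * t)]

theorem pow_div_mul_choose_eq_integral (x : ℝ) (k : ℕ) :
    x ^ (k + 1) / ((k + 1) * (3 * (k + 1)).choose (k + 1)) =
      ∫ t in (0:ℝ)..1, x ^ (k + 1) * (t ^ k * (1 - t) ^ (2 * k + 2)) := by
  rw [integral_const_mul, integral_pow_mul_one_sub_pow_s16,
    show k + (2 * k + 2) + 1 = 3 * (k + 1) by ring, div_eq_mul_inv]

theorem pow_succ_mul_pow_mul_one_sub_pow (x t : ℝ) (k : ℕ) :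
    x ^ (k + 1) * (t ^ k * (1 - t) ^ (2 * k + 2)) =
      x * (1 - t) ^ 2 * (x * (t * (1 - t) ^ 2)) ^ k := by
  rw [mul_pow, mul_pow, ← pow_mul]
  ring

theorem hasSum_pow_div_mul_choose {x : ℝ} (hx : |x| < 27 / 4) :
    HasSum (fun k : ℕ => x ^ (k + 1) / ((k + 1) * (3 * (k + 1)).choose (k + 1)))
      (∫ t in (0:ℝ)..1, x * (1 - t) ^ 2 / (1 - x * (t * (1 - t) ^ 2))) := by
  have hr : |x| * (4 / 27) < 1 := by linarith
  have hratio : ∀ t ∈ Set.uIoc (0:ℝ) 1, |x * (t * (1 - t) ^ 2)| ≤ |x| * (4 / 27) := fun t ht => by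
    rw [Set.uIoc_of_le zero_le_one] at ht
    rw [abs_mul]
    exact mul_le_mul_of_nonneg_left (abs_mul_one_sub_sq_le ht.1.le (by linarith [ht.2]))
      (abs_nonneg x)
  simp only [pow_div_mul_choose_eq_integral, pow_succ_mul_pow_mul_one_sub_pow]
  refine hasSum_integral_of_dominated_convergence (fun k _ => |x| * (|x| * (4 / 27)) ^ k)
    (fun k => by fun_prop) (fun k => .of_forall fun t ht => ?_) (.of_forall fun t _ => ?_)
    (by simp) (.of_forall fun t ht => ?_)
  · have hsq : (1 - t) ^ 2 ≤ 1 := by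
      rw [Set.uIoc_of_le zero_le_one] at ht
      nlinarith [ht.1, ht.2]
    rw [Real.norm_eq_abs, abs_mul, abs_mul, abs_pow, abs_pow, sq_abs]
    gcongr
    · exact mul_le_of_le_one_right (abs_nonneg x) hsq
    · exact hratio t ht
  · exact (summable_geometric_of_lt_one (by positivity) hr).mul_left _
  · rw [div_eq_mul_inv]
    exact (hasSum_geometric_of_abs_lt_one ((hratio t ht).trans_lt hr)).mul_left _

theorem hasDerivAt_log_arctan_primitive {t : ℝ} (ht : 3 * t + 1 ≠ 0) :
    HasDerivAt (fun t => -(2 / 3) * log (3 * t + 1) - 1 / 6 * log (9 * t ^ 2 - 21 * t + 16)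
        + (√15)⁻¹ * arctan ((6 * t - 7) / √15))
      (-(27 / 16) * (1 - t) ^ 2 / (1 - -(27 / 16) * (t * (1 - t) ^ 2))) t := by
  have hquad : 0 < 9 * t ^ 2 - 21 * t + 16 := by nlinarith [sq_nonneg (6 * t - 7)]
  have hquad' : HasDerivAt (fun t => 9 * t ^ 2 - 21 * t + 16) (18 * t - 21) t :=
    ((((hasDerivAt_pow 2 t).const_mul 9).sub ((hasDerivAt_id t).const_mul 21)).add_const
      16).congr_deriv (by norm_num; ring)
  have hlog1 : HasDerivAt (fun t => log (3 * t + 1)) (3 / (3 * t + 1)) t := by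
    simpa using (((hasDerivAt_id t).const_mul 3).add_const 1).log ht
  have harctan : HasDerivAt (fun t => arctan ((6 * t - 7) / √15))
      (1 / (1 + ((6 * t - 7) / √15) ^ 2) * (6 / √15)) t := by
    simpa using ((((hasDerivAt_id t).const_mul 6).sub_const 7).div_const √15).arctan
  refine (((hlog1.const_mul _).sub ((hquad'.log hquad.ne').const_mul _)).add
    (harctan.const_mul _)).congr_deriv ?_
  set q := 9 * t ^ 2 - 21 * t + 16 with hq
  have harctan' : (√15)⁻¹ * (1 / (1 + ((6 * t - 7) / √15) ^ 2) * (6 / √15)) = 3 / 2 / q := by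
    have h15 : √15 ^ 2 = 15 := sq_sqrt (by norm_num)
    rw [div_pow, h15, show 1 + (6 * t - 7) ^ 2 / 15 = 4 * q / 15 by rw [hq]; ring]
    field_simp
    rw [h15]
    ring
  have hden : 1 - -(27 / 16) * (t * (1 - t) ^ 2) = (3 * t + 1) * q / 16 := by
    rw [hq]; ring
  rw [harctan', hden]
  field_simp
  rw [hq]
  ring

theorem three_mul_arctan :
    3 * arctan ((4 * √3 - √15) / 11) = arctan (7 / √15) - arctan (1 / √15) := by
  set s := √3
  set q := √15
  have hs : s ^ 2 = 3 := sq_sqrt (by norm_num)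
  have hq : q ^ 2 = 15 := sq_sqrt (by norm_num)
  have hs0 : 0 < s := by positivity
  have hq0 : 0 < q := by positivity
  have hsq : 13 / 2 < s * q := by nlinarith [mul_pos hs0 hq0]
  set b := (4 * s - q) / 11
  set c := 16 * s - 7 * q
  have hb : b ^ 2 < 1 := by
    have : b ^ 2 = (63 - 8 * (s * q)) / 121 := by linear_combination (16 / 121) * hs + hq / 121
    rw [this]; linarith
  have hcb : c * b < 1 := by
    have : c * b = 27 - 4 * (s * q) := by linear_combination (64 / 11) * hs + (7 / 11) * hq
    rw [this]; linarith
  have hdouble : 2 * arctan b = arctan c := by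
    rw [two_mul_arctan (by nlinarith) (by nlinarith)]
    congr 1
    rw [div_eq_iff (by linarith)]
    linear_combination ((256 * s - 240 * q) / 121) * hs + ((72 * s - 7 * q) / 121) * hq
  have htriple : arctan c + arctan b = arctan (3 * q / 11) := by
    rw [arctan_add hcb]
    congr 1
    rw [div_eq_iff (by linarith)]
    linear_combination (192 * q / 121) * hs + ((21 * q - 132 * s) / 121) * hq
  have hsum : arctan (3 * q / 11) + arctan (1 / q) = arctan (7 / q) := by
    have hprod : 3 * q / 11 * (1 / q) = 3 / 11 := by field_simp
    rw [arctan_add (by rw [hprod]; norm_num), hprod]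
    congr 1
    field_simp
    linear_combination 3 * hq
  linarith

theorem integral_one_sub_sq_div_at_neg_27_div_16 :
    ∫ t in (0:ℝ)..1, -(27 / 16) * (1 - t) ^ 2 / (1 - -(27 / 16) * (t * (1 - t) ^ 2)) =
      (√15)⁻¹ * (arctan (7 / √15) - arctan (1 / √15)) - log 2 := by
  have hIcc : ∀ t ∈ Set.uIcc (0:ℝ) 1, 0 ≤ t := fun t ht => by
    rw [Set.uIcc_of_le zero_le_one] at ht; exact ht.1
  rw [integral_eq_sub_of_hasDerivAt
    (fun t ht => hasDerivAt_log_arctan_primitive (by linarith [hIcc t ht]))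
    (ContinuousOn.intervalIntegrable (.div (by fun_prop) (by fun_prop) fun t ht => by
      nlinarith [mul_nonneg (hIcc t ht) (sq_nonneg (1 - t))]))]
  have hlog4 : log 4 = 2 * log 2 := by
    rw [show (4:ℝ) = 2 ^ 2 by norm_num, log_pow]; norm_num
  have hlog16 : log 16 = 4 * log 2 := by
    rw [show (16:ℝ) = 2 ^ 4 by norm_num, log_pow]; norm_num
  norm_num [neg_div, hlog4, hlog16]
  ring

theorem stmt_16 :
    ∑' k : ℕ, (-(27/16) : ℝ)^(k+1) / ((((k:ℝ)+1)) * (((3*(k+1)).choose (k+1) : ℕ) : ℝ)) =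
    (Real.sqrt 15/5)*Real.arctan ((4*Real.sqrt 3 - Real.sqrt 15)/11) - Real.log 2 := by
  have hx : |(-(27 / 16) : ℝ)| < 27 / 4 := by norm_num [abs_of_neg]
  rw [(hasSum_pow_div_mul_choose hx).tsum_eq, integral_one_sub_sq_div_at_neg_27_div_16, ← three_mul_arctan]
  have hcoeff : (√15)⁻¹ * 3 = √15 / 5 := by
    field_simp
    rw [sq_sqrt (by norm_num)]
    norm_num
  linear_combination arctan ((4 * √3 - √15) / 11) * hcoeff
end
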